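/- arXiv:2604.06159 — 3 statements merged into one kernel-verified Lean document; each statement's English description precedes it below -/
import Mathlib

section
/- Let A ≥ 2, let π ∈ ℝ^A be a probability vector with π_i > 0 for all i, fix an index y, and write p = π_y. Let u ∈ ℝ^A satisfy u_y = c₊ and u_j = c₋ for all j ≠ y, with c₊ > c₋, and set λ = exp(c₊ − c₋). Define the target q by q_i = π_i · exp(u_i) / ∑_j π_j · exp(u_j). Then q − π = β · (e_y − π), where β = p(λ−1) / (1 − p + λp) and e_y is the one-hot vector at y. -/
/-! Factoring `exp cLow` out of numerator and denominator, the target is `π` reweighted by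
`w = exp (u - cLow)`, which is `λ` at `y` and `1` elsewhere, so the normaliser is
`1 - p + λ p`. Moving `π` to the left then leaves a multiple of `e_y - π` coordinatewise. -/

variable {ι : Type*} [Fintype ι]

theorem mul_exp_sub_div_sum_mul_exp_sub (π u : ι → ℝ) (c : ℝ) (i : ι) :
    π i * Real.exp (u i - c) / ∑ j, π j * Real.exp (u j - c)
      = π i * Real.exp (u i) / ∑ j, π j * Real.exp (u j) := by
  simp_rw [Real.exp_sub, ← mul_div_assoc, ← Finset.sum_div]
  exact div_div_div_cancel_right₀ (Real.exp_pos c).ne' _ _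

variable [DecidableEq ι] {π w : ι → ℝ} {y : ι} {lam : ℝ}

theorem sum_mul_of_eq_one_off (hwy : w y = lam) (hwj : ∀ j ≠ y, w j = 1) :
    ∑ j, π j * w j = ∑ j, π j + (lam - 1) * π y := by
  have hterm : ∀ j, π j * w j = π j + if j = y then (lam - 1) * π y else 0 := by
    intro j
    by_cases hj : j = y
    · rw [hj, if_pos rfl, hwy]; ring
    · rw [if_neg hj, hwj j hj]; ring
  simp_rw [hterm, Finset.sum_add_distrib, Finset.sum_ite_eq', Finset.mem_univ, if_true]

theorem mul_div_sum_mul_sub_eq_smul_one_hot (hπ : ∑ j, π j = 1)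
    (hwy : w y = lam) (hwj : ∀ j ≠ y, w j = 1) (hZ : ∑ j, π j * w j ≠ 0) (i : ι) :
    π i * w i / ∑ j, π j * w j - π i
      = (π y * (lam - 1) / (1 - π y + lam * π y)) * ((if i = y then 1 else 0) - π i) := by
  have hsum : ∑ j, π j * w j = 1 - π y + lam * π y := by
    rw [sum_mul_of_eq_one_off hwy hwj, hπ]; ring
  rw [hsum] at hZ ⊢
  rw [div_mul_eq_mul_div, div_sub' hZ, div_left_inj' hZ]
  by_cases hi : i = y
  · subst hi
    rw [if_pos rfl, hwy]
    ring
  · rw [if_neg hi, hwj i hi]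
    ring

theorem stmt_8_general (A : ℕ) (π : Fin A → ℝ)
    (hπ_pos : ∀ i, 0 < π i) (hπ_sum : ∑ i, π i = 1)
    (y : Fin A) (p : ℝ) (hp : p = π y)
    (cHigh cLow : ℝ)
    (u : Fin A → ℝ) (huy : u y = cHigh) (huj : ∀ j ≠ y, u j = cLow)
    (lam : ℝ) (hlam : lam = Real.exp (cHigh - cLow))
    (q : Fin A → ℝ)
    (hq : ∀ i, q i = π i * Real.exp (u i) / ∑ j, π j * Real.exp (u j)) :
    ∀ i, q i - π i
      = (p * (lam - 1) / (1 - p + lam * p)) * ((if i = y then 1 else 0) - π i) := by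
  intro i
  have hZ : ∑ j, π j * Real.exp (u j - cLow) ≠ 0 :=
    (Finset.sum_pos (fun j _ => mul_pos (hπ_pos j) (Real.exp_pos _)) ⟨y, Finset.mem_univ y⟩).ne'
  rw [hq i, ← mul_exp_sub_div_sum_mul_exp_sub π u cLow, hp]
  exact mul_div_sum_mul_sub_eq_smul_one_hot hπ_sum (by rw [huy, hlam])
    (fun j hj => by rw [huj j hj, sub_self, Real.exp_zero]) hZ i

theorem stmt_8 (A : ℕ) (hA : 2 ≤ A) (π : Fin A → ℝ)
    (hπ_pos : ∀ i, 0 < π i) (hπ_sum : ∑ i, π i = 1)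
    (y : Fin A) (p : ℝ) (hp : p = π y)
    (cHigh cLow : ℝ) (hc : cLow < cHigh)
    (u : Fin A → ℝ) (huy : u y = cHigh) (huj : ∀ j ≠ y, u j = cLow)
    (lam : ℝ) (hlam : lam = Real.exp (cHigh - cLow))
    (q : Fin A → ℝ)
    (hq : ∀ i, q i = π i * Real.exp (u i) / ∑ j, π j * Real.exp (u j)) :
    ∀ i, q i - π i
      = (p * (lam - 1) / (1 - p + lam * p)) * ((if i = y then 1 else 0) - π i) :=
  stmt_8_general A π hπ_pos hπ_sum y p hp cHigh cLow u huy huj lam hlam q hq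
end

section
/- Let A ≥ 2, let π ∈ ℝ^A be a probability vector with π_i > 0 for all i, fix an index j, write r = π_j, and let λ > 1. Define the target q by q_j = π_j / (λ(1 − π_j) + π_j) and q_i = λ·π_i / (λ(1 − π_j) + π_j) for every i ≠ j. Then q is a probability vector and q − π = γ(r) · (π − e_j), where γ(r) = r(λ−1) / (λ(1−r) + r) and e_j is the one-hot vector at j. -/
/-!
With `D = λ(1 - π_j) + π_j` and `γ = π_j(λ - 1)/D`, both defining formulas of `q` rearrange to
`q_i - π_i = γ (π_i - [i = j])`, a pure field identity once `D ≠ 0`. Since `π - e_j` has total mass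
zero, `q` then has total mass one; nonnegativity is read off the formulas because `D ≥ π_j > 0`.
-/

open Finset

lemma normalizer_pos {p lam : ℝ} (hp : 0 < p) (hp1 : p ≤ 1) (hlam : 0 ≤ lam) :
    0 < lam * (1 - p) + p := by
  nlinarith [mul_nonneg hlam (sub_nonneg.mpr hp1)]

lemma div_normalizer_sub_self {p lam : ℝ} (hD : lam * (1 - p) + p ≠ 0) :
    p / (lam * (1 - p) + p) - p = p * (lam - 1) / (lam * (1 - p) + p) * (p - 1) := by
  field_simp
  ring

lemma mul_div_normalizer_sub_self {p lam : ℝ} (x : ℝ) (hD : lam * (1 - p) + p ≠ 0) :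
    lam * x / (lam * (1 - p) + p) - x = p * (lam - 1) / (lam * (1 - p) + p) * x := by
  field_simp
  ring

lemma sum_eq_one_of_sub_eq_mul_sub_indicator {ι : Type*} [Fintype ι] [DecidableEq ι]
    {π q : ι → ℝ} (hπ : ∑ i, π i = 1) (c : ℝ) (j : ι)
    (h : ∀ i, q i - π i = c * (π i - if i = j then 1 else 0)) :
    ∑ i, q i = 1 := by
  have hmass : ∑ i, (q i - π i) = 0 := by
    simp only [h, ← mul_sum, sum_sub_distrib, sum_ite_eq', mem_univ, if_true, hπ, sub_self,
      mul_zero]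
  rwa [sum_sub_distrib, hπ, sub_eq_zero] at hmass

theorem stmt_9_general (A : ℕ) (π : Fin A → ℝ)
    (hπ_pos : ∀ i, 0 < π i) (hπ_sum : ∑ i, π i = 1)
    (j : Fin A) (r : ℝ) (hr : r = π j) (lam : ℝ) (hlam : 1 < lam)
    (q : Fin A → ℝ)
    (hqj : q j = π j / (lam * (1 - π j) + π j))
    (hqi : ∀ i ≠ j, q i = lam * π i / (lam * (1 - π j) + π j)) :
    ((∀ i, 0 ≤ q i) ∧ ∑ i, q i = 1) ∧
    ∀ i, q i - π i
      = (r * (lam - 1) / (lam * (1 - r) + r)) * (π i - (if i = j then 1 else 0)) := by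
  subst hr
  have hπj_le : π j ≤ 1 :=
    hπ_sum ▸ single_le_sum (fun i _ => (hπ_pos i).le) (mem_univ j)
  have hD := normalizer_pos (hπ_pos j) hπj_le (zero_le_one.trans hlam.le)
  have hshift : ∀ i, q i - π i
      = π j * (lam - 1) / (lam * (1 - π j) + π j) * (π i - if i = j then 1 else 0) := by
    intro i
    by_cases hij : i = j
    · subst hij
      rw [hqj, if_pos rfl, div_normalizer_sub_self hD.ne']
    · rw [hqi i hij, if_neg hij, sub_zero, mul_div_normalizer_sub_self _ hD.ne']
  have hq_nonneg : ∀ i, 0 ≤ q i := by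
    intro i
    by_cases hij : i = j
    · rw [hij, hqj]
      exact div_nonneg (hπ_pos j).le hD.le
    · rw [hqi i hij]
      exact div_nonneg (by nlinarith [hπ_pos i]) hD.le
  exact ⟨⟨hq_nonneg, sum_eq_one_of_sub_eq_mul_sub_indicator hπ_sum _ j hshift⟩, hshift⟩

theorem stmt_9 (A : ℕ) (hA : 2 ≤ A) (π : Fin A → ℝ)
    (hπ_pos : ∀ i, 0 < π i) (hπ_sum : ∑ i, π i = 1)
    (j : Fin A) (r : ℝ) (hr : r = π j) (lam : ℝ) (hlam : 1 < lam)
    (q : Fin A → ℝ)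
    (hqj : q j = π j / (lam * (1 - π j) + π j))
    (hqi : ∀ i ≠ j, q i = lam * π i / (lam * (1 - π j) + π j)) :
    ((∀ i, 0 ≤ q i) ∧ ∑ i, q i = 1) ∧
    ∀ i, q i - π i
      = (r * (lam - 1) / (lam * (1 - r) + r)) * (π i - (if i = j then 1 else 0)) :=
  stmt_9_general A π hπ_pos hπ_sum j r hr lam hlam q hqj hqi
end

section
/- Let A ≥ 2, let π ∈ ℝ^A be a probability vector over A actions, fix an index y with 0 < p := π_y < 1, and let σ_B = √(p(1−p)). Define the standardized advantages A(y) = (1−p)/σ_B and A(a) = −p/σ_B for a ≠ y. Then the exact population GRPO update ∑_a π(a) · A(a) · (e_a − π) equals √(p/(1−p)) · (e_y − π), where e_a denotes the one-hot vector at a. -/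
/-!
The standardized advantages have mean zero under `π`, so the baseline term
`(∑ₐ π(a) A(a)) · π` of the update vanishes and only `π(i) A(i)` survives. Since
`A(a) = (1{a = y} - p) / σ_B` and `π(y) = p`, this equals `(p / σ_B) (1{i = y} - π(i))`, and
`p / √(p(1-p)) = √(p/(1-p))`.
-/

open Finset

section GRPOUpdate

variable {ι : Type*} [Fintype ι] [DecidableEq ι]

theorem sum_mul_mul_ite_sub {R : Type*} [CommRing R] (w v : ι → R) (i : ι) :
    ∑ a, w a * v a * ((if i = a then 1 else 0) - w i) = w i * v i - (∑ a, w a * v a) * w i := by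
  simp only [mul_sub, sum_sub_distrib, ← sum_mul, mul_ite, mul_one, mul_zero, sum_ite_eq,
    mem_univ, if_true]

variable {K : Type*} [Field K]

theorem sum_mul_eq_zero_of_standardized {w v : ι → K} (hw : ∑ a, w a = 1) {y : ι} {σ : K}
    (hvy : v y = (1 - w y) / σ) (hva : ∀ a ≠ y, v a = -w y / σ) :
    ∑ a, w a * v a = 0 := by
  have hrest : ∑ a ∈ {y}ᶜ, w a * v a = (∑ a ∈ {y}ᶜ, w a) * (-w y / σ) := by
    rw [sum_mul]
    exact sum_congr rfl fun a ha => by rw [hva a (by simpa using ha)]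
  have hcompl : ∑ a ∈ {y}ᶜ, w a = 1 - w y := by
    rw [← hw, Fintype.sum_eq_add_sum_compl y w]
    ring
  rw [Fintype.sum_eq_add_sum_compl y, hrest, hcompl, hvy]
  ring

theorem sum_mul_mul_ite_sub_of_standardized {w v : ι → K} (hw : ∑ a, w a = 1) {y : ι} {σ : K}
    (hvy : v y = (1 - w y) / σ) (hva : ∀ a ≠ y, v a = -w y / σ) (i : ι) :
    ∑ a, w a * v a * ((if i = a then 1 else 0) - w i)
      = w y / σ * ((if i = y then 1 else 0) - w i) := by
  rw [sum_mul_mul_ite_sub, sum_mul_eq_zero_of_standardized hw hvy hva]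
  by_cases hiy : i = y
  · subst hiy
    rw [hvy, if_pos rfl]
    ring
  · rw [hva i hiy, if_neg hiy]
    ring

end GRPOUpdate

theorem Real.div_sqrt_mul_one_sub {p : ℝ} (hp : 0 ≤ p) : p / √(p * (1 - p)) = √(p / (1 - p)) := by
  rw [Real.sqrt_mul hp, Real.sqrt_div hp, ← div_div, Real.div_sqrt]

theorem stmt_11_general (A : ℕ) (π : Fin A → ℝ)
    (hπ_sum : ∑ i, π i = 1)
    (y : Fin A) (p : ℝ) (hp : p = π y) (hp0 : 0 < p)
    (σB : ℝ) (hσB : σB = Real.sqrt (p * (1 - p)))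
    (Adv : Fin A → ℝ)
    (hAdvy : Adv y = (1 - p) / σB)
    (hAdva : ∀ a ≠ y, Adv a = -p / σB) :
    ∀ i, ∑ a, π a * Adv a * ((if i = a then 1 else 0) - π i)
      = Real.sqrt (p / (1 - p)) * ((if i = y then 1 else 0) - π i) := by
  intro i
  subst hp hσB
  rw [sum_mul_mul_ite_sub_of_standardized hπ_sum hAdvy hAdva, Real.div_sqrt_mul_one_sub hp0.le]

theorem stmt_11 (A : ℕ) (hA : 2 ≤ A) (π : Fin A → ℝ)
    (hπ_nonneg : ∀ i, 0 ≤ π i) (hπ_sum : ∑ i, π i = 1)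
    (y : Fin A) (p : ℝ) (hp : p = π y) (hp0 : 0 < p) (hp1 : p < 1)
    (σB : ℝ) (hσB : σB = Real.sqrt (p * (1 - p)))
    (Adv : Fin A → ℝ)
    (hAdvy : Adv y = (1 - p) / σB)
    (hAdva : ∀ a ≠ y, Adv a = -p / σB) :
    ∀ i, ∑ a, π a * Adv a * ((if i = a then 1 else 0) - π i)
      = Real.sqrt (p / (1 - p)) * ((if i = y then 1 else 0) - π i) :=
  stmt_11_general A π hπ_sum y p hp hp0 σB hσB Adv hAdvy hAdva
end
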